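/- arXiv:2504.09286 — 3 statements merged into one kernel-verified Lean document; each statement's English description precedes it below -/
import Mathlib

section
/- Let G be a finite group, N ⊴ G, and P a p-subgroup of G such that P ∩ N is a Sylow p-subgroup of N. If h ∈ G is such that hN centralizes PN/N in G/N, then there exists n ∈ N with P^{hn} = P; in particular hn lies in C_{P,N} := { g ∈ G : [g,P] ⊆ P ∩ N }. -/
/-!
Since `hN` centralizes `PN/N`, `h` normalizes `PN`. The index of `P` in `PN` equals that of
`P ∩ N` in `N`, so `P` is a Sylow subgroup of `PN`, and the Frattini argument gives
`h ∈ N_G(P) · PN = N_G(P) · N`.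
-/

open scoped commutatorElement Pointwise

namespace Subgroup

variable {G : Type*} [Group G]

theorem relIndex_sup_left_eq_inf_relIndex [Finite G] (N H : Subgroup G) [N.Normal] :
    H.relIndex (N ⊔ H) = (H ⊓ N).relIndex N := by
  have towerH := relIndex_mul_relIndex (H ⊓ N) H (N ⊔ H) inf_le_left le_sup_right
  have towerN := relIndex_mul_relIndex (H ⊓ N) N (N ⊔ H) inf_le_right le_sup_left
  rw [relIndex_sup_left, ← inf_relIndex_left H N, ← towerH, mul_comm] at towerN
  exact (Nat.eq_of_mul_eq_mul_left (Nat.pos_of_ne_zero index_ne_zero_of_finite) towerN).symm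

theorem exists_conj_smul_eq_of_not_dvd_relIndex [Finite G] {p : ℕ} [Fact p.Prime]
    {P Q K : Subgroup G} (hP : IsPGroup p P) (hQ : IsPGroup p Q) (hPK : P ≤ K) (hQK : Q ≤ K)
    (hPi : ¬ p ∣ P.relIndex K) (hQi : ¬ p ∣ Q.relIndex K) :
    ∃ k ∈ K, MulAut.conj k • P = Q := by
  let S := (hP.comap_of_injective K.subtype K.subtype_injective).toSylow hPi
  let T := (hQ.comap_of_injective K.subtype K.subtype_injective).toSylow hQi
  obtain ⟨k, hk⟩ := MulAction.exists_smul_eq K S T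
  refine ⟨k, k.2, ?_⟩
  have hsub : (MulAut.conj (k : G) • P).subgroupOf K = Q.subgroupOf K := by
    rw [← conj_smul_subgroupOf hPK]
    exact congrArg Sylow.toSubgroup hk
  rwa [subgroupOf_inj, inf_of_le_left (conj_smul_le_of_le hPK k), inf_of_le_left hQK] at hsub

theorem exists_mul_mem_normalizer_of_not_dvd_relIndex [Finite G] {p : ℕ} [Fact p.Prime]
    {P K : Subgroup G} (hP : IsPGroup p P) (hPK : P ≤ K) (hPi : ¬ p ∣ P.relIndex K) {g : G}
    (hg : g ∈ normalizer (K : Set G)) : ∃ k ∈ K, g * k ∈ normalizer (P : Set G) := by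
  have hK : MulAut.conj g⁻¹ • K = K := mem_normalizer_iff_map_conj_eq.1 (inv_mem hg)
  have hQK : MulAut.conj g⁻¹ • P ≤ K := hK ▸ pointwise_smul_le_pointwise_smul_iff.2 hPK
  have hQi : ¬ p ∣ (MulAut.conj g⁻¹ • P).relIndex K := by
    rwa [← hK, relIndex_pointwise_smul]
  obtain ⟨k, hk, hkP⟩ := exists_conj_smul_eq_of_not_dvd_relIndex hP
    (Q := MulAut.conj g⁻¹ • P) (hP.map _) hPK hQK hPi hQi
  refine ⟨k, hk, mem_normalizer_iff_map_conj_eq.2 ?_⟩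
  change MulAut.conj (g * k) • P = P
  rw [map_mul, mul_smul, hkP, ← mul_smul, ← map_mul, mul_inv_cancel, map_one, one_smul]

theorem commutatorElement_mem_of_mem_normalizer {P : Subgroup G} {g x : G}
    (hg : g ∈ normalizer (P : Set G)) (hx : x ∈ P) : ⁅g, x⁆ ∈ P :=
  mul_mem ((mem_normalizer_iff.1 hg x).1 hx) (inv_mem hx)

end Subgroup

namespace QuotientGroup

variable {G : Type*} [Group G] {N : Subgroup G} [N.Normal]

theorem commutatorElement_mem_iff_commute {g x : G} :
    ⁅g, x⁆ ∈ N ↔ Commute (g : G ⧸ N) x := by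
  rw [← eq_one_iff, ← commutatorElement_eq_one_iff_commute]
  exact Iff.of_eq (congrArg (· = 1) (map_commutatorElement (mk' N) g x))

theorem mem_normalizer_sup_of_forall_commute {P : Subgroup G} {g : G}
    (hg : ∀ x ∈ P, Commute (g : G ⧸ N) x) :
    g ∈ Subgroup.normalizer ((N ⊔ P : Subgroup G) : Set G) := by
  have hcomap : (P.map (mk' N)).comap (mk' N) = N ⊔ P := by
    rw [Subgroup.comap_map_eq, ker_mk', sup_comm]
  rw [← hcomap]
  refine Subgroup.le_normalizer_comap _ (Subgroup.centralizer_le_normalizer _ ?_)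
  rw [Subgroup.mem_centralizer_iff]
  rintro _ ⟨x, hx, rfl⟩
  exact (hg x hx).symm.eq

end QuotientGroup

open Subgroup QuotientGroup

/-- Let `G` be a finite group, `N ⊴ G`, and `P` a `p`-subgroup of `G` such that `P ⊓ N` is a
Sylow `p`-subgroup of `N`. If `h ∈ G` is such that `hN` centralizes `PN/N` in `G/N`
(i.e. all commutators `⁅h, x⁆` with `x ∈ P` lie in `N`), then there exists `n ∈ N` with
`P^{hn} = P`; in particular `hn` lies in `C_{P,N} = {g : [g,P] ⊆ P ∩ N}`. -/
theorem stmt_2 {G : Type*} [Group G] [Finite G] (p : ℕ) [Fact p.Prime]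
    (N P : Subgroup G) [N.Normal] (hP : IsPGroup p P)
    (hSyl : ∃ S : Sylow p N, (S : Subgroup N) = (P ⊓ N).subgroupOf N)
    (h : G) (hcent : ∀ x ∈ P, ⁅h, x⁆ ∈ N) :
    ∃ n ∈ N, P.map (MulAut.conj (h * n)⁻¹).toMonoidHom = P ∧
      ∀ x ∈ P, ⁅h * n, x⁆ ∈ P ⊓ N := by
  obtain ⟨S, hS⟩ := hSyl
  have hind : ¬ p ∣ P.relIndex (N ⊔ P) := by
    rw [relIndex_sup_left_eq_inf_relIndex, relIndex, ← hS]
    exact S.not_dvd_index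
  have hcomm (x : G) (hx : x ∈ P) : Commute (h : G ⧸ N) x :=
    commutatorElement_mem_iff_commute.1 (hcent x hx)
  obtain ⟨k, hk, hhk⟩ := exists_mul_mem_normalizer_of_not_dvd_relIndex hP le_sup_right hind
    (mem_normalizer_sup_of_forall_commute hcomm)
  obtain ⟨n, hn, x, hx, rfl⟩ : k ∈ (N : Set G) * P := normal_mul N P ▸ hk
  have hhn : h * n ∈ normalizer (P : Set G) := by
    simpa [mul_assoc] using mul_mem hhk (inv_mem (le_normalizer hx))
  refine ⟨n, hn, mem_normalizer_iff_map_conj_eq.1 (inv_mem hhn), fun y hy ↦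
    ⟨commutatorElement_mem_of_mem_normalizer hhn hy, commutatorElement_mem_iff_commute.2 ?_⟩⟩
  rw [mk_mul, (eq_one_iff n).2 hn, mul_one]
  exact hcomm y hy
end

section
/- Let G be a finite group, N ⊴ G, and P ≤ Q two p-subgroups of G with [C_{Q,N}, P] ⊆ Q ∩ N = P ∩ N assumed, where C_{Q,N} = { g ∈ G : [g,Q] ⊆ Q ∩ N }. Then C_{Q,N} ≤ C_{P,N}, and moreover Q normalizes C_{P,N}, so that C_{P,N}Q = QC_{P,N} is a subgroup of G. -/
/-!
`C_{R,N}` is the preimage in `N_G(R)` of the centralizer of `RN/N` in `G/N`, hence a subgroup,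
and it is normalized by everything that normalizes `R`. Since `P ⊴ Q`, the group `Q` normalizes
`C_{P,N}`, which makes `C_{P,N} Q = Q C_{P,N}` a subgroup.
-/

open Pointwise
open scoped commutatorElement

namespace Subgroup

variable {G : Type*} [Group G]

/-- The paper's `C_{R,N}`, taken inside `N_G(R)` so that it is a subgroup for every `R`; for finite
`R` the condition `[g, R] ⊆ R ⊓ N` already forces `g ∈ N_G(R)`. -/
def relCentralizer (R N : Subgroup G) [N.Normal] : Subgroup G :=
  normalizer (R : Set G) ⊓ (centralizer (R.map (QuotientGroup.mk' N) : Set (G ⧸ N))).comap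
    (QuotientGroup.mk' N)

variable {R N : Subgroup G} [N.Normal] {g : G}

theorem mem_relCentralizer_iff :
    g ∈ relCentralizer R N ↔ g ∈ normalizer (R : Set G) ∧ ∀ x ∈ R, ⁅g, x⁆ ∈ N := by
  rw [relCentralizer, mem_inf, mem_comap, mem_centralizer_iff, coe_map, Set.forall_mem_image]
  refine and_congr_right fun _ ↦ forall₂_congr fun x _ ↦ ?_
  rw [← QuotientGroup.eq_one_iff, ← QuotientGroup.mk'_apply, map_commutatorElement,
    commutatorElement_eq_one_iff_commute]
  exact eq_comm

theorem mem_relCentralizer_iff_commutator_mem_inf [Finite R] :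
    g ∈ relCentralizer R N ↔ ∀ x ∈ R, ⁅g, x⁆ ∈ R ⊓ N := by
  rw [mem_relCentralizer_iff]
  refine ⟨fun ⟨hgR, hgN⟩ x hx ↦ mem_inf.mpr ⟨?_, hgN x hx⟩,
    fun h ↦ ⟨mem_normalizer_fintype fun x hx ↦ ?_, fun x hx ↦ (h x hx).2⟩⟩
  · rw [commutatorElement_def]
    exact mul_mem ((mem_normalizer_iff.mp hgR x).mp hx) (inv_mem hx)
  · have := mul_mem (h x hx).1 hx
    rwa [commutatorElement_def, inv_mul_cancel_right] at this

theorem coe_relCentralizer [Finite R] :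
    (relCentralizer R N : Set G) = {g | ∀ x ∈ R, ⁅g, x⁆ ∈ R ⊓ N} :=
  Set.ext fun _ ↦ mem_relCentralizer_iff_commutator_mem_inf

theorem normalizer_le_normalizer_relCentralizer :
    normalizer (R : Set G) ≤ normalizer (relCentralizer R N : Set G) := by
  refine le_normalizer_iff.mpr fun q hq g hg ↦ ?_
  rw [mem_relCentralizer_iff] at hg ⊢
  refine ⟨mul_mem (mul_mem hq hg.1) (inv_mem hq), fun x hx ↦ ?_⟩
  have hconj : ⁅q * g * q⁻¹, x⁆ = q * ⁅g, q⁻¹ * x * q⁆ * q⁻¹ := by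
    simp only [commutatorElement_def]; group
  rw [hconj]
  exact Normal.conj_mem inferInstance _ (hg.2 _ ((mem_normalizer_iff''.mp hq x).mp hx)) q

theorem conj_inv_image_eq_of_mem_normalizer {s : Set G} (hg : g ∈ normalizer s) :
    (fun x ↦ g⁻¹ * x * g) '' s = s := by
  refine (Set.image_congr fun x _ ↦ ?_).trans (mem_normalizer_iff_conj_image_eq.mp (inv_mem hg))
  rw [MulAut.conj_apply, inv_inv]

end Subgroup

theorem stmt_3_general {G : Type*} [Group G] [Finite G]
    (N P Q : Subgroup G) [N.Normal]
    (hPnormQ : ∀ q ∈ Q, ∀ x ∈ P, q * x * q⁻¹ ∈ P)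
    (hEq : Q ⊓ N = P ⊓ N)
    (hComm : ∀ g ∈ {g : G | ∀ x ∈ Q, ⁅g, x⁆ ∈ Q ⊓ N}, ∀ x ∈ P, ⁅g, x⁆ ∈ Q ⊓ N) :
    ({g : G | ∀ x ∈ Q, ⁅g, x⁆ ∈ Q ⊓ N} ⊆ {g : G | ∀ x ∈ P, ⁅g, x⁆ ∈ P ⊓ N}) ∧
    (∀ q ∈ Q, (fun x => q⁻¹ * x * q) '' {g : G | ∀ x ∈ P, ⁅g, x⁆ ∈ P ⊓ N}
        = {g : G | ∀ x ∈ P, ⁅g, x⁆ ∈ P ⊓ N}) ∧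
    ({g : G | ∀ x ∈ P, ⁅g, x⁆ ∈ P ⊓ N} * (Q : Set G)
        = (Q : Set G) * {g : G | ∀ x ∈ P, ⁅g, x⁆ ∈ P ⊓ N}) ∧
    (∃ H : Subgroup G, (H : Set G) = {g : G | ∀ x ∈ P, ⁅g, x⁆ ∈ P ⊓ N} * (Q : Set G)) := by
  refine ⟨fun g hg x hx ↦ hEq ▸ hComm g hg x hx, ?_⟩
  rw [← Subgroup.coe_relCentralizer (R := P) (N := N)]
  have hQ : Q ≤ Subgroup.normalizer (P.relCentralizer N : Set G) :=
    (Subgroup.le_normalizer_iff.mpr hPnormQ).trans Subgroup.normalizer_le_normalizer_relCentralizer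
  exact ⟨fun q hq ↦ Subgroup.conj_inv_image_eq_of_mem_normalizer (hQ hq),
    (Subgroup.set_mul_normalizer_comm _ _ hQ).symm,
    _, Subgroup.coe_mul_of_right_le_normalizer_left _ _ hQ⟩

/-- Let `G` be a finite group, `N ⊴ G`, and `P ⊴ Q` two `p`-subgroups of `G` with
`P ⊓ N`, `Q ⊓ N` Sylow `p`-subgroups of `N` and `Q ⊓ N = P ⊓ N`, and assume
`[C_{Q,N}, P] ⊆ Q ⊓ N`, where `C_{R,N} = {g : [g,R] ⊆ R ⊓ N}`. Then
`C_{Q,N} ⊆ C_{P,N}`, `Q` normalizes `C_{P,N}`, so `C_{P,N}Q = QC_{P,N}` is a subgroup of `G`. -/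
theorem stmt_3 {G : Type*} [Group G] [Finite G] (p : ℕ) [Fact p.Prime]
    (N P Q : Subgroup G) [N.Normal] (hP : IsPGroup p P) (hQ : IsPGroup p Q)
    (hPQ : P ≤ Q) (hPnormQ : ∀ q ∈ Q, ∀ x ∈ P, q * x * q⁻¹ ∈ P)
    (hEq : Q ⊓ N = P ⊓ N)
    (hPSyl : ∃ S : Sylow p N, (S : Subgroup N) = (P ⊓ N).subgroupOf N)
    (hQSyl : ∃ S : Sylow p N, (S : Subgroup N) = (Q ⊓ N).subgroupOf N)
    (hComm : ∀ g ∈ {g : G | ∀ x ∈ Q, ⁅g, x⁆ ∈ Q ⊓ N}, ∀ x ∈ P, ⁅g, x⁆ ∈ Q ⊓ N) :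
    ({g : G | ∀ x ∈ Q, ⁅g, x⁆ ∈ Q ⊓ N} ⊆ {g : G | ∀ x ∈ P, ⁅g, x⁆ ∈ P ⊓ N}) ∧
    (∀ q ∈ Q, (fun x => q⁻¹ * x * q) '' {g : G | ∀ x ∈ P, ⁅g, x⁆ ∈ P ⊓ N}
        = {g : G | ∀ x ∈ P, ⁅g, x⁆ ∈ P ⊓ N}) ∧
    ({g : G | ∀ x ∈ P, ⁅g, x⁆ ∈ P ⊓ N} * (Q : Set G)
        = (Q : Set G) * {g : G | ∀ x ∈ P, ⁅g, x⁆ ∈ P ⊓ N}) ∧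
    (∃ H : Subgroup G, (H : Set G) = {g : G | ∀ x ∈ P, ⁅g, x⁆ ∈ P ⊓ N} * (Q : Set G)) :=
  stmt_3_general N P Q hPnormQ hEq hComm
end

section
/- Let B be a pseudocompact algebra, P a topologically finitely generated projective B-module, and for each open ideal-coinvariant quotient B_N of B let P_N denote the corresponding quotient of P. Then the endomorphism algebras End_{B_N}(P_N) form a surjective inverse system whose inverse limit is End_B(P). In particular (surjectivity): given N ≤ M and an endomorphism δ of P_M, projectivity of P_N lifts δ to an endomorphism δ' of P_N with (δ')_M = δ. -/
/-- The natural transition map `P/I_{n+1}P → P/I_nP` for a descending chain of ideals. -/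
def stmt12.tau {B : Type*} [Ring B] {P : Type*} [AddCommGroup P] [Module B P]
    (I : ℕ → Ideal B) (hdesc : ∀ n, I (n + 1) ≤ I n) (n : ℕ) :
    (P ⧸ (I (n + 1) • ⊤ : Submodule B P)) →ₗ[B] P ⧸ (I n • ⊤ : Submodule B P) :=
  Submodule.mapQ _ _ LinearMap.id
    (by rw [Submodule.comap_id]; exact Submodule.smul_mono_left (hdesc n))

/-- Let `B` be a pseudocompact algebra and `P` a projective `B`-module, with the quotients
`P_n = P/I_nP` for a descending chain of open ideals `I n` separating `P` and with `P` complete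
(every compatible family of elements of the `P_n` lifts).  Then the endomorphism algebras
`End(P_n)` form a surjective inverse system whose inverse limit is `End_B(P)`:
(1) each endomorphism of `P_n` lifts along the transition map to an endomorphism of `P_{n+1}`
(surjectivity, by projectivity); (2) the natural map `End_B(P) → lim End(P_n)` is injective;
(3) every compatible family of endomorphisms of the `P_n` is induced by an endomorphism of
`P`. -/
theorem stmt_12 {B : Type*} [Ring B] {P : Type*} [AddCommGroup P] [Module B P]
    (hproj : Module.Projective B P)
    (I : ℕ → Ideal B) (hdesc : ∀ n, I (n + 1) ≤ I n)
    (hsep : (⨅ n, (I n • ⊤ : Submodule B P)) = ⊥)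
    (hcompl : ∀ x : ∀ n, P ⧸ (I n • ⊤ : Submodule B P),
      (∀ n, stmt12.tau I hdesc n (x (n + 1)) = x n) →
      ∃ y : P, ∀ n, Submodule.mkQ (I n • ⊤ : Submodule B P) y = x n) :
    (∀ (n : ℕ) (δ : Module.End B (P ⧸ (I n • ⊤ : Submodule B P))),
      ∃ δ' : Module.End B (P ⧸ (I (n + 1) • ⊤ : Submodule B P)),
        (stmt12.tau I hdesc n).comp δ' = (δ : _ →ₗ[B] _).comp (stmt12.tau I hdesc n)) ∧
    (∀ δ δ' : Module.End B P,
      (∀ (n : ℕ) (x : P), Submodule.mkQ (I n • ⊤ : Submodule B P) (δ x) =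
        Submodule.mkQ (I n • ⊤ : Submodule B P) (δ' x)) → δ = δ') ∧
    (∀ γ : ∀ n, Module.End B (P ⧸ (I n • ⊤ : Submodule B P)),
      (∀ n, (stmt12.tau I hdesc n).comp (γ (n + 1) : _ →ₗ[B] _) =
        ((γ n : _ →ₗ[B] _)).comp (stmt12.tau I hdesc n)) →
      ∃ δ : Module.End B P, ∀ (n : ℕ) (x : P),
        γ n (Submodule.mkQ (I n • ⊤ : Submodule B P) x) =
          Submodule.mkQ (I n • ⊤ : Submodule B P) (δ x)) := by
  have key : ∀ z : P, (∀ n, Submodule.mkQ (I n • ⊤ : Submodule B P) z = 0) → z = 0 := by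
    intro z hz
    have hmem : z ∈ (⨅ n, (I n • ⊤ : Submodule B P)) := by
      rw [Submodule.mem_iInf]
      intro n
      have := hz n
      rwa [Submodule.mkQ_apply, Submodule.Quotient.mk_eq_zero] at this
    rw [hsep] at hmem
    simpa using hmem
  have tau_mk : ∀ (n : ℕ) (x : P),
      stmt12.tau I hdesc n (Submodule.mkQ (I (n + 1) • ⊤ : Submodule B P) x) =
        Submodule.mkQ (I n • ⊤ : Submodule B P) x := by
    intro n x
    simp [stmt12.tau, Submodule.mkQ_apply, Submodule.mapQ_apply]
  refine ⟨?_, ?_, ?_⟩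
  · -- surjectivity of transition maps via projectivity
    intro n δ
    obtain ⟨g, hg⟩ := Module.projective_lifting_property
      (Submodule.mkQ (I n • ⊤ : Submodule B P))
      ((δ : _ →ₗ[B] _).comp ((stmt12.tau I hdesc n).comp
        (Submodule.mkQ (I (n + 1) • ⊤ : Submodule B P))))
      (Submodule.mkQ_surjective _)
    refine ⟨Submodule.mapQ _ _ g ?_, ?_⟩
    · rw [← Submodule.map_le_iff_le_comap, Submodule.map_smul'']
      exact Submodule.smul_mono le_rfl le_top
    · refine LinearMap.ext fun x => ?_
      obtain ⟨y, rfl⟩ := Submodule.mkQ_surjective _ x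
      have := LinearMap.congr_fun hg y
      simp only [LinearMap.comp_apply, Submodule.mkQ_apply] at this ⊢
      rw [Submodule.mapQ_apply, ← Submodule.mkQ_apply, ← Submodule.mkQ_apply, tau_mk]
      exact this
  · -- injectivity
    intro δ δ' h
    ext x
    have : δ x - δ' x = 0 := by
      apply key
      intro n
      rw [map_sub, h n x, sub_self]
    exact sub_eq_zero.mp this
  · -- completeness: compatible families come from End_B(P)
    intro γ hγ
    have hcomp : ∀ x : P, ∃ y : P, ∀ n,
        Submodule.mkQ (I n • ⊤ : Submodule B P) y =
          γ n (Submodule.mkQ (I n • ⊤ : Submodule B P) x) := by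
      intro x
      apply hcompl (fun n => γ n (Submodule.mkQ (I n • ⊤ : Submodule B P) x))
      intro n
      have h1 := LinearMap.congr_fun (hγ n) (Submodule.mkQ (I (n + 1) • ⊤ : Submodule B P) x)
      simp only [LinearMap.comp_apply] at h1
      rw [h1, tau_mk]
    choose f hf using hcomp
    refine ⟨⟨⟨f, ?_⟩, ?_⟩, ?_⟩
    · intro a b
      have : f (a + b) - (f a + f b) = 0 := by
        apply key
        intro n
        simp only [map_sub, map_add, hf]
        abel
      exact sub_eq_zero.mp this
    · intro c a
      have : f (c • a) - c • f a = 0 := by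
        apply key
        intro n
        simp only [map_sub, map_smul, hf]
        abel
      exact sub_eq_zero.mp this
    · intro n x
      exact (hf x n).symm
end
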